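/- Let σ > 0 and let F : ℝ → ℝ be bounded and measurable. Then the smoothed objective θ ↦ ∫ F(x) d(gaussianReal θ σ²)(x) is differentiable at every θ ∈ ℝ, and its derivative at θ equals ∫ F(x) · ((x − θ)/σ²) d(gaussianReal θ σ²)(x). (This is the log-likelihood-ratio gradient identity ∇_θ E_{θ'∼p(·|θ)}[F(θ')] = E[∇_θ log p(θ'|θ) · F(θ')] for a Gaussian search distribution, since the score of the Gaussian density with mean θ and variance σ² at x is (x − θ)/σ².) -/

import Mathlib

/-!
Differentiate under the integral sign in the density form
`∫ F dN(t, v) = ∫ F(x) φ_t(x) dx`: the mean-derivative of the Gaussian density is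
`φ_t(x) (x - t) / v`, and for `|t - θ| ≤ 1` it is dominated by a multiple of
`(|x - θ| + 1) exp(-(x - θ)² / (4v))`, which is integrable; boundedness of `F` carries the
domination over to the integrand.
-/

open MeasureTheory Real
open scoped NNReal

namespace ProbabilityTheory

lemma hasDerivAt_gaussianPDFReal_mean (v : ℝ≥0) (x t : ℝ) :
    HasDerivAt (fun μ ↦ gaussianPDFReal μ v x) (gaussianPDFReal t v x * ((x - t) / v)) t := by
  have h_exponent : HasDerivAt (fun μ : ℝ ↦ -(x - μ) ^ 2 / (2 * v)) ((x - t) / v) t := by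
    have h_sub : HasDerivAt (fun μ : ℝ ↦ x - μ) (-1) t := by
      simpa using (hasDerivAt_id t).const_sub x
    refine ((h_sub.pow 2).neg.div_const (2 * (v : ℝ))).congr_deriv ?_
    by_cases hv : (v : ℝ) = 0
    · simp [hv]
    · field_simp
      ring
  refine (h_exponent.exp.const_mul (√(2 * π * v))⁻¹).congr_deriv ?_
  simp only [gaussianPDFReal]
  ring

lemma exp_neg_sq_div_le_of_abs_sub_le_one {v : ℝ} (hv : 0 < v) {x t θ : ℝ} (h : |t - θ| ≤ 1) :
    rexp (-(x - t) ^ 2 / (2 * v)) ≤ rexp (1 / (2 * v)) * rexp (-(1 / (4 * v)) * (x - θ) ^ 2) := by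
  rw [← exp_add, exp_le_exp]
  have h_sq : (x - θ) ^ 2 ≤ 2 * (x - t) ^ 2 + 2 := by
    nlinarith [sq_nonneg ((x - t) - (t - θ)), sq_abs (t - θ), abs_nonneg (t - θ)]
  have h_lhs : -(x - t) ^ 2 / (2 * v) = -2 * (x - t) ^ 2 / (4 * v) := by
    field_simp
    ring
  have h_rhs : 1 / (2 * v) + -(1 / (4 * v)) * (x - θ) ^ 2 = (2 - (x - θ) ^ 2) / (4 * v) := by
    field_simp
    ring
  rw [h_lhs, h_rhs]
  gcongr
  linarith

lemma gaussianPDFReal_mul_abs_sub_div_le {v : ℝ≥0} (hv : v ≠ 0) {x t θ : ℝ} (h : |t - θ| ≤ 1) :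
    gaussianPDFReal t v x * (|x - t| / v) ≤
      (√(2 * π * v))⁻¹ * rexp (1 / (2 * v)) / v *
        ((|x - θ| + 1) * rexp (-(1 / (4 * (v : ℝ))) * (x - θ) ^ 2)) := by
  have hv_pos : 0 < (v : ℝ) := by positivity
  have h_dist : |x - t| ≤ |x - θ| + 1 := by
    calc |x - t| ≤ |x - θ| + |θ - t| := abs_sub_le x θ t
      _ ≤ |x - θ| + 1 := by rw [abs_sub_comm θ t]; linarith
  calc gaussianPDFReal t v x * (|x - t| / v)
      = (√(2 * π * v))⁻¹ * rexp (-(x - t) ^ 2 / (2 * v)) * |x - t| / v := by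
        rw [gaussianPDFReal]; ring
    _ ≤ (√(2 * π * v))⁻¹ * (rexp (1 / (2 * v)) * rexp (-(1 / (4 * (v : ℝ))) * (x - θ) ^ 2)) *
          (|x - θ| + 1) / v := by
        gcongr
        exact exp_neg_sq_div_le_of_abs_sub_le_one hv_pos h
    _ = _ := by ring

lemma integrable_abs_sub_add_one_mul_exp_neg_mul_sq {b : ℝ} (hb : 0 < b) (θ : ℝ) :
    Integrable (fun x : ℝ ↦ (|x - θ| + 1) * rexp (-b * (x - θ) ^ 2)) := by
  have h_centered : Integrable (fun x : ℝ ↦ (|x| + 1) * rexp (-b * x ^ 2)) := by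
    refine ((integrable_mul_exp_neg_mul_sq hb).abs.add (integrable_exp_neg_mul_sq hb)).congr
      (ae_of_all _ fun x ↦ ?_)
    simp only [Pi.add_apply, abs_mul, abs_of_pos (exp_pos _)]
    ring
  exact (measurePreserving_sub_right volume θ).integrable_comp
    h_centered.aestronglyMeasurable |>.mpr h_centered

theorem hasDerivAt_integral_gaussianReal_mean {v : ℝ≥0} (hv : v ≠ 0) {F : ℝ → ℝ}
    (hF_meas : AEStronglyMeasurable F) {C : ℝ} (hF_bdd : ∀ x, |F x| ≤ C) (θ : ℝ) :
    HasDerivAt (fun t ↦ ∫ x, F x ∂gaussianReal t v)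
      (∫ x, F x * ((x - θ) / v) ∂gaussianReal θ v) θ := by
  simp only [integral_gaussianReal_eq_integral_smul hv, smul_eq_mul]
  have hv_pos : 0 < (v : ℝ) := by positivity
  have hF_norm : ∀ x, ‖F x‖ ≤ C := hF_bdd
  have h_decay : 0 < 1 / (4 * (v : ℝ)) := by positivity
  have h_deriv := hasDerivAt_integral_of_dominated_loc_of_deriv_le
    (F := fun t x ↦ gaussianPDFReal t v x * F x)
    (F' := fun t x ↦ gaussianPDFReal t v x * ((x - t) / v) * F x)
    (bound := fun x ↦ (√(2 * π * v))⁻¹ * rexp (1 / (2 * v)) / v *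
      ((|x - θ| + 1) * rexp (-(1 / (4 * (v : ℝ))) * (x - θ) ^ 2)) * C)
    (Metric.closedBall_mem_nhds θ one_pos)
    (.of_forall fun t ↦ (measurable_gaussianPDFReal t v).aestronglyMeasurable.mul hF_meas)
    ((integrable_gaussianPDFReal θ v).mul_bdd hF_meas (ae_of_all _ hF_norm))
    (((measurable_gaussianPDFReal θ v).mul
      ((measurable_id.sub_const θ).div_const _)).aestronglyMeasurable.mul hF_meas)
    (ae_of_all _ fun x t ht ↦ ?_)
    (((integrable_abs_sub_add_one_mul_exp_neg_mul_sq h_decay θ).const_mul _).mul_const C)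
    (ae_of_all _ fun x t _ ↦ (hasDerivAt_gaussianPDFReal_mean v x t).mul_const (F x))
  · refine h_deriv.2.congr_deriv (integral_congr_ae (ae_of_all _ fun x ↦ ?_))
    ring
  · have h_ball : |t - θ| ≤ 1 := by rwa [Metric.mem_closedBall, dist_eq] at ht
    rw [norm_mul, norm_mul, norm_div, Real.norm_of_nonneg (gaussianPDFReal_nonneg t v x),
      Real.norm_of_nonneg hv_pos.le, Real.norm_eq_abs, Real.norm_eq_abs]
    exact mul_le_mul (gaussianPDFReal_mul_abs_sub_div_le hv h_ball) (hF_bdd x) (abs_nonneg _)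
      (by positivity)

end ProbabilityTheory

open ProbabilityTheory

/-- Log-likelihood-ratio gradient identity for a Gaussian search distribution:
the smoothed objective `θ ↦ ∫ F(x) d(gaussianReal θ σ²)(x)` is differentiable at every `θ`
with derivative `∫ F(x) · ((x − θ)/σ²) d(gaussianReal θ σ²)(x)`. -/
theorem smoothed_objective_hasDerivAt_score
    (σ : ℝ) (hσ : 0 < σ) (F : ℝ → ℝ)
    (hF_meas : Measurable F) (hF_bdd : ∃ C : ℝ, ∀ x, |F x| ≤ C) (θ : ℝ) :
    HasDerivAt (fun t : ℝ => ∫ x, F x ∂(gaussianReal t (Real.toNNReal (σ ^ 2))))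
      (∫ x, F x * ((x - θ) / σ ^ 2) ∂(gaussianReal θ (Real.toNNReal (σ ^ 2)))) θ := by
  obtain ⟨C, hC⟩ := hF_bdd
  have hv : (σ ^ 2).toNNReal ≠ 0 := by simpa using hσ.ne'
  have hv_coe : ((σ ^ 2).toNNReal : ℝ) = σ ^ 2 := Real.coe_toNNReal _ (sq_nonneg σ)
  simpa only [hv_coe] using
    hasDerivAt_integral_gaussianReal_mean hv hF_meas.aestronglyMeasurable hC θ
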